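/- In the hypercube Q_n with n ≥ 2, for every vertex v and every other vertex u, the edges incident to v do not lie on all shortest paths between any pair of vertices avoiding v; consequently, every MEG-set of Q_n contains every vertex. -/

import Mathlib

open SimpleGraph

/-- Two vertices `x` and `y` monitor an edge `e` in `G`: there is a shortest path between
them, and `e` lies on every shortest path between `x` and `y`. -/
def Monitors {V : Type*} (G : SimpleGraph V) (x y : V) (e : Sym2 V) : Prop :=
  (∃ p : G.Walk x y, p.IsPath ∧ p.length = G.dist x y) ∧
    ∀ p : G.Walk x y, p.IsPath → p.length = G.dist x y → e ∈ p.edges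

/-- `S` is a monitoring edge-geodetic set of `G`. -/
def IsMEGSet {V : Type*} (G : SimpleGraph V) (S : Set V) : Prop :=
  ∀ e ∈ G.edgeSet, ∃ x ∈ S, ∃ y ∈ S, Monitors G x y e

/-- The minimum size of a monitoring edge-geodetic set of `G`. -/
noncomputable def megNum {V : Type*} (G : SimpleGraph V) : ℕ :=
  sInf {n | ∃ S : Set V, IsMEGSet G S ∧ S.ncard = n}

/-- The set of leaves (degree-1 vertices) of `G`. -/
def leaves {V : Type*} (G : SimpleGraph V) : Set V :=
  {v | (G.neighborSet v).ncard = 1}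


/-- The hypercube graph of dimension `n`: vertices are binary strings of length `n`,
adjacent iff they differ in exactly one bit. -/
def hypercubeGraph (n : ℕ) : SimpleGraph (Fin n → Bool) where
  Adj x y := ∃! i, x i ≠ y i
  symm := by
    constructor
    rintro x y ⟨i, hi, hu⟩
    exact ⟨i, hi.symm, fun j hj => hu j hj.symm⟩
  loopless := by
    constructor
    rintro x ⟨i, hi, -⟩
    exact hi rfl

/-!
Every edge of `Q_n` flips one bit, so a walk from `x` to `y` has length at least their Hamming
distance, and copying the differing bits of `y` into `x` one at a time gives a walk of exactly
that length. At each step some choice of bit avoids a given vertex `v ∉ {x, y}`: if every choice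
landed on `v`, then `v` would agree with `y` in every coordinate. Hence `x` and `y` are joined by a
shortest path through no edge at `v`, and since every vertex has an incident edge, an MEG-set
must contain every vertex.
-/

section hammingDist

variable {ι β : Type*} [Fintype ι] [DecidableEq ι] [DecidableEq β]

theorem hammingDist_update_add_one {x y : ι → β} {i : ι} (h : x i ≠ y i) :
    hammingDist (Function.update x i (y i)) y + 1 = hammingDist x y := by
  have hfilter : ({j | Function.update x i (y i) j ≠ y j} : Finset ι) =
      ({j | x j ≠ y j} : Finset ι).erase i := by
    ext j
    rcases eq_or_ne j i with rfl | hji <;> simp [*]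
  rw [hammingDist, hfilter, Finset.card_erase_add_one (by simpa using h), hammingDist]

theorem exists_update_ne_of_ne {x y v : ι → β} (hxy : x ≠ y) (hyv : y ≠ v) :
    ∃ i, x i ≠ y i ∧ Function.update x i (y i) ≠ v := by
  by_contra! h
  obtain ⟨i, hi⟩ := Function.ne_iff.1 hxy
  refine hyv (funext fun j => ?_)
  by_cases hj : x j = y j
  · rw [← h i hi]
    rcases eq_or_ne j i with rfl | hji <;> simp [*]
  · rw [← h j hj, Function.update_self]

end hammingDist

namespace hypercubeGraph

variable {n : ℕ}

theorem adj_iff_hammingDist_eq_one {x y : Fin n → Bool} :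
    (hypercubeGraph n).Adj x y ↔ hammingDist x y = 1 := by
  simp [hypercubeGraph, hammingDist, Finset.card_eq_one_iff_existsUnique]

theorem adj_update {x : Fin n → Bool} {i : Fin n} {b : Bool} (hb : x i ≠ b) :
    (hypercubeGraph n).Adj x (Function.update x i b) := by
  have := hammingDist_update_add_one (x := x) (y := Function.update x i b) (i := i)
    (by simpa using hb)
  simpa [adj_iff_hammingDist_eq_one] using this.symm

theorem hammingDist_le_length {x y : Fin n → Bool} (p : (hypercubeGraph n).Walk x y) :
    hammingDist x y ≤ p.length := by
  induction p with
  | nil => simp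
  | @cons a b c hab p ih =>
    calc hammingDist a c ≤ hammingDist a b + hammingDist b c := hammingDist_triangle a b c
      _ ≤ p.length + 1 := by rw [adj_iff_hammingDist_eq_one.1 hab]; omega
      _ = (Walk.cons hab p).length := by simp

theorem exists_walk_length_eq_hammingDist_not_mem_support {x y v : Fin n → Bool}
    (hxv : x ≠ v) (hyv : y ≠ v) :
    ∃ p : (hypercubeGraph n).Walk x y, p.length = hammingDist x y ∧ v ∉ p.support := by
  induction hd : hammingDist x y generalizing x with
  | zero =>
    obtain rfl := hammingDist_eq_zero.1 hd
    exact ⟨.nil, rfl, by simpa using hxv.symm⟩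
  | succ d ih =>
    have hxy : x ≠ y := hammingDist_ne_zero.1 (by omega)
    obtain ⟨i, hi, hiv⟩ := exists_update_ne_of_ne hxy hyv
    obtain ⟨p, hp, hvp⟩ := ih hiv (by have := hammingDist_update_add_one hi; omega)
    exact ⟨.cons (adj_update hi) p, by simp [hp], by simp [hxv.symm, hvp]⟩

theorem exists_shortest_path_not_mem_support {x y v : Fin n → Bool}
    (hxv : x ≠ v) (hyv : y ≠ v) :
    ∃ p : (hypercubeGraph n).Walk x y,
      p.IsPath ∧ p.length = (hypercubeGraph n).dist x y ∧ v ∉ p.support := by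
  obtain ⟨p, hp, hvp⟩ := exists_walk_length_eq_hammingDist_not_mem_support hxv hyv
  obtain ⟨r, hr⟩ := Reachable.exists_walk_length_eq_dist ⟨p⟩
  have hdist : hammingDist x y ≤ (hypercubeGraph n).dist x y := hr ▸ hammingDist_le_length r
  refine ⟨p.bypass, p.bypass_isPath, ?_, fun h => hvp (p.support_bypass_subset_support h)⟩
  exact le_antisymm (p.length_bypass_le_length.trans (hp ▸ hdist)) (dist_le _)

end hypercubeGraph

theorem not_monitors_of_shortest_path_not_mem_support {V : Type*} {G : SimpleGraph V}
    {x y v : V} {e : Sym2 V} (hve : v ∈ e) (p : G.Walk x y) (hp : p.IsPath)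
    (hpd : p.length = G.dist x y) (hvp : v ∉ p.support) : ¬ Monitors G x y e :=
  fun h => hvp (Walk.mem_support_of_mem_edges (h.2 p hp hpd) hve)

theorem IsMEGSet.mem_of_adj {V : Type*} {G : SimpleGraph V} {S : Set V} (hS : IsMEGSet G S)
    {v w : V} (hvw : G.Adj v w)
    (h : ∀ x y, x ≠ v → y ≠ v → ¬ Monitors G x y s(v, w)) : v ∈ S := by
  obtain ⟨x, hx, y, hy, hxy⟩ := hS s(v, w) hvw
  by_contra hvS
  exact h x y (by rintro rfl; exact hvS hx) (by rintro rfl; exact hvS hy) hxy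

theorem hypercube_no_avoiding_monitor (n : ℕ) (hn : 2 ≤ n) :
    (∀ (v : Fin n → Bool) (e : Sym2 (Fin n → Bool)), e ∈ (hypercubeGraph n).edgeSet →
      v ∈ e → ∀ x y : Fin n → Bool, x ≠ v → y ≠ v → ¬ Monitors (hypercubeGraph n) x y e) ∧
    ∀ S : Set (Fin n → Bool), IsMEGSet (hypercubeGraph n) S → ∀ v, v ∈ S := by
  have no_monitor : ∀ (v : Fin n → Bool) (e : Sym2 (Fin n → Bool)), v ∈ e →
      ∀ x y, x ≠ v → y ≠ v → ¬ Monitors (hypercubeGraph n) x y e := by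
    intro v e hve x y hxv hyv
    obtain ⟨p, hp, hpd, hvp⟩ := hypercubeGraph.exists_shortest_path_not_mem_support hxv hyv
    exact not_monitors_of_shortest_path_not_mem_support hve p hp hpd hvp
  refine ⟨fun v e _ => no_monitor v e, fun S hS v => ?_⟩
  let i : Fin n := ⟨0, by omega⟩
  exact hS.mem_of_adj (hypercubeGraph.adj_update (i := i) (b := !v i) (by simp))
    (fun x y => no_monitor v _ (Sym2.mem_mk_left _ _) x y)
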